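/- Let T = [t1 t2; t3 t4] with positive entries summing to 1. For the ℓ-fold Kronecker power P of T and for any i with z_i zero bits, Σ over j with exactly z zero bits of P(i,j) = Σ_{c=max(0, z+z_i-ℓ)}^{min(z, z_i)} C(z_i, c)·C(ℓ-z_i, z-c)·t1^c t2^{z_i-c} t3^{z-c} t4^{ℓ-z_i-z+c}, where C denotes binomial coefficients. -/

import Mathlib

open Finset

noncomputable section

/-- The ℓ-fold Kronecker power of a 2×2 real matrix, indexed by `Fin (2^ℓ)`,
identifying an index with its ℓ-bit binary representation. -/
def kronPow : (ℓ : ℕ) → Matrix (Fin 2) (Fin 2) ℝ → Matrix (Fin (2 ^ ℓ)) (Fin (2 ^ ℓ)) ℝ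
  | 0, _ => 1
  | ℓ + 1, T => fun i j =>
      T ⟨i.val / 2 ^ ℓ, Nat.div_lt_of_lt_mul (pow_succ 2 ℓ ▸ i.isLt)⟩
        ⟨j.val / 2 ^ ℓ, Nat.div_lt_of_lt_mul (pow_succ 2 ℓ ▸ j.isLt)⟩
      * kronPow ℓ T
          ⟨i.val % 2 ^ ℓ, Nat.mod_lt _ (by positivity)⟩
          ⟨j.val % 2 ^ ℓ, Nat.mod_lt _ (by positivity)⟩

/-- Number of zero bits among the ℓ low-order bits of `i`. -/
def zeroBits (ℓ i : ℕ) : ℕ :=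
  ((Finset.range ℓ).filter (fun k => i / 2 ^ k % 2 = 0)).card

/-- Number of bit positions (among the ℓ low-order ones) where both `i` and `j` have bit zero. -/
def commonZeros (ℓ i j : ℕ) : ℕ :=
  ((Finset.range ℓ).filter (fun k => i / 2 ^ k % 2 = 0 ∧ j / 2 ^ k % 2 = 0)).card

open Polynomial

lemma zeroBits_le (ℓ i : ℕ) : zeroBits ℓ i ≤ ℓ :=
  (Finset.card_filter_le _ _).trans (by simp)

lemma low_bit {k ℓ : ℕ} (hk : k < ℓ) (a b : ℕ) :
    (a * 2 ^ ℓ + b) / 2 ^ k % 2 = b / 2 ^ k % 2 := by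
  obtain ⟨m, rfl⟩ : ∃ m, ℓ = k + m + 1 := ⟨ℓ - k - 1, by omega⟩
  have h : a * 2 ^ (k + m + 1) + b = 2 ^ k * (a * 2 ^ m * 2) + b := by ring
  rw [h, Nat.mul_add_div (by positivity), add_comm, Nat.add_mul_mod_self_right]

lemma zeroBits_add (ℓ a b : ℕ) (hb : b < 2 ^ ℓ) :
    zeroBits (ℓ + 1) (a * 2 ^ ℓ + b) = zeroBits ℓ b + (if a % 2 = 0 then 1 else 0) := by
  unfold zeroBits
  rw [Finset.range_add_one, Finset.filter_insert]
  have htop : (a * 2 ^ ℓ + b) / 2 ^ ℓ % 2 = a % 2 := by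
    rw [Nat.add_comm, Nat.add_mul_div_right _ _ (by positivity : (0:ℕ) < 2 ^ ℓ),
      Nat.div_eq_of_lt hb, Nat.zero_add]
  have hfilt : (Finset.range ℓ).filter (fun k => (a * 2 ^ ℓ + b) / 2 ^ k % 2 = 0)
      = (Finset.range ℓ).filter (fun k => b / 2 ^ k % 2 = 0) := by
    apply Finset.filter_congr
    intro k hk
    simp only [Finset.mem_range] at hk
    simp [low_bit hk]
  rw [hfilt, htop]
  by_cases ha : a % 2 = 0
  · simp only [ha, if_pos rfl, if_pos]
    rw [Finset.card_insert_of_notMem (by simp)]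
  · simp [ha]

lemma lin_pow (u v : ℝ) (a : ℕ) :
    (C u * X + C v) ^ a
      = ∑ c ∈ Finset.range (a + 1), C (u ^ c * v ^ (a - c) * (a.choose c : ℝ)) * X ^ c := by
  rw [add_pow]
  refine Finset.sum_congr rfl fun c _ => ?_
  rw [mul_pow, ← C_pow, ← C_pow]
  push_cast
  rw [← C_eq_natCast]
  rw [C_mul, C_mul]
  ring

lemma coeff_lin_pow (u v : ℝ) (a k : ℕ) :
    ((C u * X + C v) ^ a).coeff k = u ^ k * v ^ (a - k) * (a.choose k : ℝ) := by
  rw [lin_pow, finset_sum_coeff]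
  simp only [coeff_C_mul, coeff_X_pow]
  rw [Finset.sum_eq_single k]
  · simp
  · intro c _ hc; simp [Ne.symm hc]
  · intro hk
    simp only [Finset.mem_range, not_lt] at hk
    rw [Nat.choose_eq_zero_of_lt (by omega)]
    simp

lemma kronPow_succ_apply (ℓ : ℕ) (T : Matrix (Fin 2) (Fin 2) ℝ) (i j : Fin (2 ^ (ℓ + 1)))
    (ihi jhi : Fin 2) (ilo jlo : Fin (2 ^ ℓ))
    (h1 : i.val / 2 ^ ℓ = ihi.val) (h2 : j.val / 2 ^ ℓ = jhi.val)
    (h3 : i.val % 2 ^ ℓ = ilo.val) (h4 : j.val % 2 ^ ℓ = jlo.val) :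
    kronPow (ℓ + 1) T i j = T ihi jhi * kronPow ℓ T ilo jlo := by
  simp only [kronPow]
  congr 1 <;> first | rfl | exact Fin.ext ‹_› | (congr 1 <;> first | rfl | exact Fin.ext ‹_›)

lemma gen_sum (ℓ : ℕ) (T : Matrix (Fin 2) (Fin 2) ℝ) (i : Fin (2 ^ ℓ)) :
    ∑ j : Fin (2 ^ ℓ), C (kronPow ℓ T i j) * (X : ℝ[X]) ^ (zeroBits ℓ j.val)
      = (C (T 0 0) * X + C (T 0 1)) ^ (zeroBits ℓ i.val) *
        (C (T 1 0) * X + C (T 1 1)) ^ (ℓ - zeroBits ℓ i.val) := by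
  induction ℓ with
  | zero =>
      have huniv : (Finset.univ : Finset (Fin (2 ^ 0))) = {i} := by
        ext j; simp [Fin.ext_iff, Nat.lt_one_iff.mp j.isLt, Nat.lt_one_iff.mp i.isLt]
      rw [huniv, Finset.sum_singleton]
      have h1 : kronPow 0 T i i = 1 := Matrix.one_apply_eq i
      simp [h1, zeroBits]
  | succ ℓ ih =>
      have hpow : 2 * 2 ^ ℓ = 2 ^ (ℓ + 1) := by ring
      set e : Fin 2 × Fin (2 ^ ℓ) ≃ Fin (2 ^ (ℓ + 1)) :=
        finProdFinEquiv.trans (finCongr hpow) with he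
      have hval : ∀ (a : Fin 2) (b : Fin (2 ^ ℓ)),
          (e (a, b)).val = a.val * 2 ^ ℓ + b.val := by
        intro a b
        simp [he, finCongr, finProdFinEquiv]
        ring
      have hihi : i.val / 2 ^ ℓ < 2 := Nat.div_lt_of_lt_mul (pow_succ 2 ℓ ▸ i.isLt)
      have hilo : i.val % 2 ^ ℓ < 2 ^ ℓ := Nat.mod_lt _ (by positivity)
      set ihi : Fin 2 := ⟨i.val / 2 ^ ℓ, hihi⟩ with hihidef
      set ilo : Fin (2 ^ ℓ) := ⟨i.val % 2 ^ ℓ, hilo⟩ with hilodef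
      have hterm : ∀ (a : Fin 2) (b : Fin (2 ^ ℓ)),
          C (kronPow (ℓ + 1) T i (e (a, b))) * (X : ℝ[X]) ^ zeroBits (ℓ + 1) (e (a, b)).val
            = (C (T ihi a) * X ^ (if a = (0 : Fin 2) then 1 else 0)) *
              (C (kronPow ℓ T ilo b) * X ^ zeroBits ℓ b.val) := by
        intro a b
        have hv := hval a b
        have hdiv : (e (a, b)).val / 2 ^ ℓ = a.val := by
          rw [hv, add_comm, Nat.add_mul_div_right _ _ (by positivity : (0:ℕ) < 2 ^ ℓ),
            Nat.div_eq_of_lt b.isLt, Nat.zero_add]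
        have hmod : (e (a, b)).val % 2 ^ ℓ = b.val := by
          rw [hv, add_comm, Nat.add_mul_mod_self_right, Nat.mod_eq_of_lt b.isLt]
        have hzb : zeroBits (ℓ + 1) (e (a, b)).val
            = zeroBits ℓ b.val + (if a = (0 : Fin 2) then 1 else 0) := by
          rw [hv, zeroBits_add ℓ a.val b.val b.isLt, Nat.mod_eq_of_lt a.isLt]
          congr 1
          by_cases h : a = 0
          · simp [h]
          · have hne : a.val ≠ 0 := fun hh => h (Fin.ext hh)
            simp [h, hne]
        rw [kronPow_succ_apply ℓ T i (e (a, b)) ihi a ilo b rfl hdiv rfl hmod, hzb,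
          C_mul, pow_add]
        ring
      rw [← Equiv.sum_comp e (fun j : Fin (2 ^ (ℓ + 1)) =>
        C (kronPow (ℓ + 1) T i j) * (X : ℝ[X]) ^ zeroBits (ℓ + 1) j.val),
        Fintype.sum_prod_type]
      simp only [hterm]
      simp only [← Finset.mul_sum]
      rw [ih ilo, Fin.sum_univ_two]
      have hzi : zeroBits (ℓ + 1) i.val
          = zeroBits ℓ ilo.val + (if ihi = (0 : Fin 2) then 1 else 0) := by
        have hisplit : i.val = ihi.val * 2 ^ ℓ + ilo.val := by
          rw [hihidef, hilodef]
          rw [Nat.mul_comm]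
          exact (Nat.div_add_mod _ _).symm
        rw [hisplit, zeroBits_add ℓ ihi.val ilo.val ilo.isLt, Nat.mod_eq_of_lt ihi.isLt]
        congr 1
        by_cases h : ihi = 0
        · have hv0 : i.val / 2 ^ ℓ = 0 := congrArg Fin.val h
          simp [h, hv0]
        · have hne : i.val / 2 ^ ℓ ≠ 0 := fun hh => h (Fin.ext hh)
          simp [h, hne]
      have hle : zeroBits ℓ ilo.val ≤ ℓ := zeroBits_le _ _
      by_cases h0 : ihi = 0
      · rw [hzi, if_pos h0, h0]
        have : ℓ + 1 - (zeroBits ℓ ilo.val + 1) = ℓ - zeroBits ℓ ilo.val := by omega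
        rw [this, pow_succ]
        norm_num
        ring
      · have h1 : ihi = 1 := by
          have := ihi.isLt
          have hne : ihi.val ≠ 0 := fun hh => h0 (Fin.ext hh)
          exact Fin.ext (by omega)
        rw [hzi, if_neg h0, h1, Nat.add_zero]
        have : ℓ + 1 - zeroBits ℓ ilo.val = (ℓ - zeroBits ℓ ilo.val) + 1 := by omega
        rw [this, pow_succ]
        norm_num
        ring

theorem skg_row_slice_sum (ℓ : ℕ) (T : Matrix (Fin 2) (Fin 2) ℝ)
    (hpos : ∀ a b, 0 < T a b)
    (hsum : T 0 0 + T 0 1 + T 1 0 + T 1 1 = 1) (i : Fin (2 ^ ℓ)) (z : ℕ) (hz : z ≤ ℓ) :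
    ∑ j ∈ Finset.univ.filter (fun j : Fin (2 ^ ℓ) => zeroBits ℓ j.val = z),
        kronPow ℓ T i j =
      ∑ c ∈ Finset.Icc (z + zeroBits ℓ i.val - ℓ) (min z (zeroBits ℓ i.val)),
        (Nat.choose (zeroBits ℓ i.val) c : ℝ) *
          (Nat.choose (ℓ - zeroBits ℓ i.val) (z - c) : ℝ) *
          T 0 0 ^ c * T 0 1 ^ (zeroBits ℓ i.val - c) * T 1 0 ^ (z - c) *
          T 1 1 ^ (ℓ + c - zeroBits ℓ i.val - z) := by
  classical
  have hzi : zeroBits ℓ i.val ≤ ℓ := zeroBits_le ℓ i.val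
  set zi := zeroBits ℓ i.val with hzidef
  have key := congrArg (fun p : ℝ[X] => p.coeff z) (gen_sum ℓ T i)
  rw [finset_sum_coeff, coeff_mul, Finset.Nat.sum_antidiagonal_eq_sum_range_succ_mk] at key
  simp only [coeff_C_mul, coeff_X_pow, coeff_lin_pow] at key
  have hLHS : (∑ x : Fin (2 ^ ℓ), kronPow ℓ T i x * if z = zeroBits ℓ x.val then 1 else 0)
      = ∑ j ∈ Finset.filter (fun j => zeroBits ℓ j.val = z) Finset.univ, kronPow ℓ T i j := by
    rw [Finset.sum_filter]
    refine Finset.sum_congr rfl fun j _ => ?_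
    by_cases h : zeroBits ℓ j.val = z
    · simp [h]
    · rw [if_neg (fun hh => h hh.symm), mul_zero, if_neg h]
  rw [hLHS, ← hzidef] at key
  rw [key]
  have hsub : Finset.Icc (z + zi - ℓ) (z ⊓ zi) ⊆ Finset.range z.succ := by
    intro c hc
    rw [Finset.mem_Icc] at hc
    rw [Finset.mem_range]
    omega
  rw [← Finset.sum_subset hsub ?hvan]
  case hvan =>
    intro c hcr hcn
    rw [Finset.mem_range] at hcr
    rw [Finset.mem_Icc] at hcn
    push_neg at hcn
    by_cases hcz : zi < c
    · rw [Nat.choose_eq_zero_of_lt hcz]; simp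
    · have h2 : ℓ - zi < z - c := by omega
      rw [Nat.choose_eq_zero_of_lt h2]; simp
  refine Finset.sum_congr rfl fun c hc => ?_
  rw [Finset.mem_Icc] at hc
  have hexp : ℓ - zi - (z - c) = ℓ + c - zi - z := by omega
  rw [hexp]
  ring
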